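/- Let z ∈ ℍ^{n+1} be a negative vector, u ∈ ℍ^{n+1} a null vector, and v ∈ ℍ^{n+1} a negative vector, with u, v, z pairwise non-proportional. Then the line-distance quantity d(u,v;z) = inf{ |⟨z,w⟩|²/(⟨z,z⟩⟨w,w⟩) : w = uλ + vμ, λ,μ ∈ ℍ, ⟨w,w⟩ < 0 } equals 2·Re(⟨u,z⟩⟨u,v⟩⁻¹⟨z,v⟩⟨z,z⟩⁻¹) − (|⟨u,z⟩|²·⟨v,v⟩)/(|⟨u,v⟩|²·⟨z,z⟩). -/

import Mathlib

open scoped Quaternion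

noncomputable section

/-- The quaternionic Hermitian form of signature (n,1) on ℍ^{n+1}:
`⟨z,w⟩ = w̄₁ z_{n+1} + Σ_{i=2}^n w̄ᵢ zᵢ + w̄_{n+1} z₁`. -/
noncomputable def herm {n : ℕ} (z w : Fin (n+1) → ℍ[ℝ]) : ℍ[ℝ] :=
  star (w 0) * z (Fin.last n)
    + ∑ i ∈ Finset.Ioo (0 : Fin (n+1)) (Fin.last n), star (w i) * z i
    + star (w (Fin.last n)) * z 0

/-- `w` is (right-)proportional to `z`: `w = zλ` for some `λ ∈ ℍ`. -/
def Prp {n : ℕ} (z w : Fin (n+1) → ℍ[ℝ]) : Prop :=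
  ∃ lam : ℍ[ℝ], w = fun i => z i * lam

/-- Right scalar multiplication on ℍ^{n+1}. -/
noncomputable def smulR {n : ℕ} (z : Fin (n+1) → ℍ[ℝ]) (lam : ℍ[ℝ]) :
    Fin (n+1) → ℍ[ℝ] := fun i => z i * lam

/-- The quaternionic triple product `⟨p₁,p₂,p₃⟩ = ⟨p₂,p₁⟩⟨p₃,p₂⟩⟨p₁,p₃⟩`. -/
noncomputable def tri {n : ℕ} (p₁ p₂ p₃ : Fin (n+1) → ℍ[ℝ]) : ℍ[ℝ] :=
  herm p₂ p₁ * herm p₃ p₂ * herm p₁ p₃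

/-- The quaternionic Cartan angular invariant
`𝔸(p₁,p₂,p₃) = arccos(Re(−⟨p₁,p₂,p₃⟩)/|⟨p₁,p₂,p₃⟩|)`. -/
noncomputable def cartan {n : ℕ} (p₁ p₂ p₃ : Fin (n+1) → ℍ[ℝ]) : ℝ :=
  Real.arccos ((-(tri p₁ p₂ p₃)).re / ‖tri p₁ p₂ p₃‖)

/-- The quaternionic cross-ratio `𝕏(p₁,p₂,p₃,p₄) = ⟨p₃,p₁⟩⟨p₃,p₂⟩⁻¹⟨p₄,p₂⟩⟨p₄,p₁⟩⁻¹`. -/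
noncomputable def crossX {n : ℕ} (p₁ p₂ p₃ p₄ : Fin (n+1) → ℍ[ℝ]) : ℍ[ℝ] :=
  herm p₃ p₁ * (herm p₃ p₂)⁻¹ * herm p₄ p₂ * (herm p₄ p₁)⁻¹

/-- The group Sp(n,1) of quaternionic matrices preserving the Hermitian form. -/
def SpGrp (n : ℕ) : Set (Matrix (Fin (n+1)) (Fin (n+1)) ℍ[ℝ]) :=
  {g | ∀ z w : Fin (n+1) → ℍ[ℝ], herm (g.mulVec z) (g.mulVec w) = herm z w}

/-- Similarity of quaternions: `b = μ a μ⁻¹` for some nonzero `μ`. -/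
def QSim (a b : ℍ[ℝ]) : Prop := ∃ mu : ℍ[ℝ], mu ≠ 0 ∧ b = mu * a * mu⁻¹

/-- `η(u,v,z) = ⟨u,z⟩⟨u,v⟩⁻¹⟨z,v⟩⟨z,z⟩⁻¹`. -/
noncomputable def etaq {n : ℕ} (u v z : Fin (n+1) → ℍ[ℝ]) : ℍ[ℝ] :=
  herm u z * (herm u v)⁻¹ * herm z v * (herm z z)⁻¹

/-- The line-distance quantity
`d(u,v;z) = inf { |⟨z,w⟩|²/(⟨z,z⟩⟨w,w⟩) : w = uλ + vμ, ⟨w,w⟩ < 0 }`;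
it equals `cosh²(ρ(L_{uv},z)/2)`. -/
noncomputable def lineDist {n : ℕ} (u v z : Fin (n+1) → ℍ[ℝ]) : ℝ :=
  sInf { x : ℝ | ∃ lam mu : ℍ[ℝ],
    (herm (fun i => u i * lam + v i * mu) (fun i => u i * lam + v i * mu)).re < 0 ∧
    x = ‖herm z (fun i => u i * lam + v i * mu)‖^2
        / ((herm z z).re *
           (herm (fun i => u i * lam + v i * mu) (fun i => u i * lam + v i * mu)).re) }

open Quaternion

/-! Write `w = uλ + vμ`. Since `u` is null, `⟨w,w⟩ = lineForm ⟨u,v⟩ ⟨v,v⟩ λ μ`, and if `c` is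
chosen with `uc + v ⊥ z` then `⟨z,w⟩ = (λ - cμ)⋆ ⟨z,u⟩`. Completing the square,
`|λ - cμ|² = k ⟨w,w⟩ + |λ - (c + k ⟨u,v⟩⋆) μ|²` with `k = -⟨uc + v, uc + v⟩ / |⟨u,v⟩|²`, so the ratio
is at least `|⟨z,u⟩|² k / ⟨z,z⟩`, with equality at `λ = c + k ⟨u,v⟩⋆`, `μ = 1`. The sign `k < 0` is
the positivity of the form on `z⊥`, applied to `uc + v ≠ 0`. -/

def lineForm (A : ℍ[ℝ]) (β : ℝ) (lam mu : ℍ[ℝ]) : ℝ :=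
  2 * (star mu * A * lam).re + normSq mu * β

lemma normSq_sub_mul_eq_lineForm_add (A c lam mu : ℍ[ℝ]) (β k : ℝ)
    (hk : lineForm A β c 1 + k * normSq A = 0) :
    normSq (lam - c * mu) = k * lineForm A β lam mu + normSq (lam - (c + k • star A) * mu) := by
  simp only [lineForm, normSq_def', re_mul, imI_mul, imJ_mul, imK_mul, re_sub, imI_sub, imJ_sub,
    imK_sub, re_add, imI_add, imJ_add, imK_add, re_smul, imI_smul, imJ_smul, imK_smul, re_star,
    imI_star, imJ_star, imK_star, smul_eq_mul, re_one, imI_one, imJ_one, imK_one] at hk ⊢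
  linear_combination (-k * (mu.re ^ 2 + mu.imI ^ 2 + mu.imJ ^ 2 + mu.imK ^ 2)) * hk

lemma isLeast_mul_normSq_sub_mul_div_lineForm (a β δ k : ℝ) (A c : ℍ[ℝ]) (ha : 0 ≤ a)
    (hδ : δ < 0) (hA : A ≠ 0) (hk : lineForm A β c 1 + k * normSq A = 0) (hk0 : k < 0) :
    IsLeast {x : ℝ | ∃ lam mu : ℍ[ℝ], lineForm A β lam mu < 0 ∧
        x = a * normSq (lam - c * mu) / (δ * lineForm A β lam mu)} (a * k / δ) := by
  constructor
  · have hD : lineForm A β (c + k • star A) 1 = k * normSq A := by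
      have h := normSq_sub_mul_eq_lineForm_add A c (c + k • star A) 1 β k hk
      rw [mul_one, mul_one, sub_self, map_zero, add_zero, add_sub_cancel_left, normSq_smul,
        normSq_star, sq, mul_assoc] at h
      exact (mul_left_cancel₀ hk0.ne h).symm
    have hA' : normSq A ≠ 0 := normSq_ne_zero.2 hA
    refine ⟨c + k • star A, 1, hD ▸ mul_neg_of_neg_of_pos hk0 (normSq_nonneg.lt_of_ne' hA'), ?_⟩
    rw [normSq_sub_mul_eq_lineForm_add A c _ 1 β k hk, hD, mul_one, sub_self, map_zero, add_zero]
    field_simp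
  · rintro x ⟨lam, mu, hD, rfl⟩
    rw [normSq_sub_mul_eq_lineForm_add A c lam mu β k hk,
      show a * (k * lineForm A β lam mu + normSq (lam - (c + k • star A) * mu))
          / (δ * lineForm A β lam mu)
        = a * k / δ + a * normSq (lam - (c + k • star A) * mu) / (δ * lineForm A β lam mu) by
          field_simp [hD.ne]]
    exact le_add_of_nonneg_right
      (div_nonneg (mul_nonneg ha normSq_nonneg) (mul_pos_of_neg_of_neg hδ hD).le)

section HermitianForm

variable {n : ℕ}

def linComb (u v : Fin (n+1) → ℍ[ℝ]) (lam mu : ℍ[ℝ]) : Fin (n+1) → ℍ[ℝ] :=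
  fun i => u i * lam + v i * mu

lemma star_herm (z w : Fin (n+1) → ℍ[ℝ]) : star (herm z w) = herm w z := by
  simp only [herm, star_add, star_mul, star_star, star_sum]
  abel

lemma herm_self_eq_coe_re (w : Fin (n+1) → ℍ[ℝ]) : herm w w = ((herm w w).re : ℍ[ℝ]) :=
  star_eq_self.mp (star_herm w w)

lemma herm_linComb_left (u v w : Fin (n+1) → ℍ[ℝ]) (lam mu : ℍ[ℝ]) :
    herm (linComb u v lam mu) w = herm u w * lam + herm v w * mu := by
  simp only [herm, linComb, mul_add, add_mul, Finset.sum_add_distrib, Finset.sum_mul, mul_assoc]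
  abel

lemma herm_linComb_right (z u v : Fin (n+1) → ℍ[ℝ]) (lam mu : ℍ[ℝ]) :
    herm z (linComb u v lam mu) = star lam * herm z u + star mu * herm z v := by
  rw [← star_herm, herm_linComb_left, star_add, star_mul, star_mul, star_herm, star_herm]

lemma re_herm_linComb_self (u v : Fin (n+1) → ℍ[ℝ]) (lam mu : ℍ[ℝ]) :
    (herm (linComb u v lam mu) (linComb u v lam mu)).re
      = normSq lam * (herm u u).re + lineForm (herm u v) (herm v v).re lam mu := by
  rw [herm_linComb_right, herm_linComb_left, herm_linComb_left, ← star_herm u v,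
    herm_self_eq_coe_re u, herm_self_eq_coe_re v]
  simp only [lineForm, normSq_def', re_mul, imI_mul, imJ_mul, imK_mul, re_add, imI_add, imJ_add,
    imK_add, re_star, imI_star, imJ_star, imK_star, re_coe, imI_coe, imJ_coe, imK_coe]
  ring

lemma re_herm_linComb_self_of_null {u : Fin (n+1) → ℍ[ℝ]} (huu : herm u u = 0)
    (v : Fin (n+1) → ℍ[ℝ]) (lam mu : ℍ[ℝ]) :
    (herm (linComb u v lam mu) (linComb u v lam mu)).re
      = lineForm (herm u v) (herm v v).re lam mu := by
  rw [re_herm_linComb_self, huu, re_zero, mul_zero, zero_add]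

lemma re_herm_self_of_head_eq_zero (x : Fin (n+1) → ℍ[ℝ]) (h0 : x 0 = 0) :
    (herm x x).re = ∑ i ∈ Finset.Ioo 0 (Fin.last n), normSq (x i) := by
  simp only [herm, h0, star_zero, zero_mul, mul_zero, add_zero, zero_add, star_mul_self]
  exact map_sum (QuaternionAlgebra.reₗ (R := ℝ) (-1) 0 (-1)) _ _

lemma head_ne_zero_of_re_herm_self_neg {z : Fin (n+1) → ℍ[ℝ]} (hz : (herm z z).re < 0) :
    z 0 ≠ 0 := fun h0 =>
  hz.not_ge <| re_herm_self_of_head_eq_zero z h0 ▸ Finset.sum_nonneg fun _ _ => normSq_nonneg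

lemma eq_zero_of_herm_eq_zero {z w : Fin (n+1) → ℍ[ℝ]} (hz0 : z 0 ≠ 0) (hzw : herm z w = 0)
    (h0 : w 0 = 0) (hmid : ∀ i ∈ Finset.Ioo 0 (Fin.last n), w i = 0) : w = 0 := by
  have hlast : w (Fin.last n) = 0 := by
    have hsum : ∑ i ∈ Finset.Ioo 0 (Fin.last n), star (w i) * z i = 0 :=
      Finset.sum_eq_zero fun i hi => by rw [hmid i hi, star_zero, zero_mul]
    simpa [herm, hsum, h0, hz0] using hzw
  funext i
  by_cases hi0 : i = 0
  · exact hi0 ▸ h0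
  by_cases hil : i = Fin.last n
  · exact hil ▸ hlast
  · exact hmid i (Finset.mem_Ioo.2 ⟨Fin.pos_of_ne_zero hi0, (Fin.le_last i).lt_of_ne hil⟩)

lemma re_herm_self_pos_of_herm_eq_zero {z w : Fin (n+1) → ℍ[ℝ]} (hz : (herm z z).re < 0)
    (hzw : herm z w = 0) (hw : w ≠ 0) : 0 < (herm w w).re := by
  have hz0 := head_ne_zero_of_re_herm_self_neg hz
  -- `x = w - zs` has vanishing first coordinate, so `⟨x,x⟩` is a sum of squares.
  set s := (z 0)⁻¹ * w 0
  set x := linComb w z 1 (-s)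
  have hx0 : x 0 = 0 := by simp [x, linComb, s, ← mul_assoc, mul_inv_cancel₀ hz0]
  have hwz : herm w z = 0 := by rw [← star_herm, hzw, star_zero]
  have hxx : ∑ i ∈ Finset.Ioo 0 (Fin.last n), normSq (x i)
      = (herm w w).re + normSq s * (herm z z).re := by
    rw [← re_herm_self_of_head_eq_zero x hx0, re_herm_linComb_self, lineForm, hwz]
    simp
  have hsum_nonneg : 0 ≤ ∑ i ∈ Finset.Ioo 0 (Fin.last n), normSq (x i) :=
    Finset.sum_nonneg fun _ _ => normSq_nonneg
  by_contra! hle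
  have hs : s = 0 := normSq_le_zero.1 (by nlinarith [normSq_nonneg (a := s)])
  have hsum : ∑ i ∈ Finset.Ioo 0 (Fin.last n), normSq (x i) = 0 := by
    rw [hs, map_zero, zero_mul, add_zero] at hxx
    linarith
  apply hw
  refine eq_zero_of_herm_eq_zero hz0 hzw ?_ fun i hi => ?_
  · simpa [s, hz0] using hs
  · have hxi := (Finset.sum_eq_zero_iff_of_nonneg fun _ _ => normSq_nonneg).1 hsum i hi
    simpa [x, linComb, hs] using hxi

lemma herm_ne_zero_of_null {z u : Fin (n+1) → ℍ[ℝ]} (hz : (herm z z).re < 0) (hu : u ≠ 0)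
    (huu : herm u u = 0) : herm z u ≠ 0 := fun h => by
  simpa [huu] using re_herm_self_pos_of_herm_eq_zero hz h hu

lemma linComb_ne_zero_of_not_prp {u v : Fin (n+1) → ℍ[ℝ]} (huv : ¬ Prp u v) (c : ℍ[ℝ]) :
    linComb u v c 1 ≠ 0 := fun h =>
  huv ⟨-c, funext fun i => by
    rw [mul_neg]
    exact eq_neg_of_add_eq_zero_right (by simpa [linComb] using congrFun h i)⟩

end HermitianForm

section LineDistance

variable {n : ℕ} {u v z : Fin (n+1) → ℍ[ℝ]} {c : ℍ[ℝ]}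

lemma lineDist_eq_sInf (huu : herm u u = 0) (hc : herm z (linComb u v c 1) = 0) :
    lineDist u v z = sInf {x : ℝ | ∃ lam mu : ℍ[ℝ],
      lineForm (herm u v) (herm v v).re lam mu < 0 ∧
      x = normSq (herm z u) * normSq (lam - c * mu)
        / ((herm z z).re * lineForm (herm u v) (herm v v).re lam mu)} := by
  rw [herm_linComb_right, star_one, one_mul] at hc
  unfold lineDist
  congr 1
  ext x
  refine exists₂_congr fun lam mu => ?_
  change (herm (linComb u v lam mu) (linComb u v lam mu)).re < 0 ∧
      x = ‖herm z (linComb u v lam mu)‖ ^ 2 / ((herm z z).re *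
        (herm (linComb u v lam mu) (linComb u v lam mu)).re) ↔ _
  have hzw : herm z (linComb u v lam mu) = star (lam - c * mu) * herm z u := by
    rw [herm_linComb_right, eq_neg_of_add_eq_zero_right hc, star_sub, star_mul, sub_mul,
      mul_assoc, mul_neg, sub_eq_add_neg]
  rw [re_herm_linComb_self_of_null huu, hzw, sq, ← normSq_eq_norm_mul_self, normSq.map_mul,
    normSq_star, mul_comm (normSq (lam - c * mu))]

lemma two_mul_re_etaq_sub_eq (hA : herm u v ≠ 0) (hz : (herm z z).re < 0)
    (hc : herm z (linComb u v c 1) = 0) :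
    2 * (etaq u v z).re
        - ‖herm u z‖ ^ 2 * (herm v v).re / (‖herm u v‖ ^ 2 * (herm z z).re)
      = normSq (herm z u)
          * (-lineForm (herm u v) (herm v v).re c 1 / normSq (herm u v)) / (herm z z).re := by
  rw [herm_linComb_right, star_one, one_mul] at hc
  have hA' : normSq (herm u v) ≠ 0 := normSq_ne_zero.2 hA
  have hz' := hz.ne
  rw [etaq, ← star_herm z u, herm_self_eq_coe_re z, norm_star, sq, sq, ← normSq_eq_norm_mul_self,
    ← normSq_eq_norm_mul_self, eq_neg_of_add_eq_zero_right hc, ← coe_inv, inv_def]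
  simp only [lineForm, normSq_def', re_mul, imI_mul, imJ_mul, imK_mul, re_smul, imI_smul,
    imJ_smul, imK_smul, re_star, imI_star, imJ_star, imK_star, smul_eq_mul, re_neg, imI_neg,
    imJ_neg, imK_neg, re_coe, imI_coe, imJ_coe, imK_coe, re_one, imI_one, imJ_one, imK_one] at hA' hz' ⊢
  field_simp
  ring

end LineDistance

theorem stmt10_general {n : ℕ} (u v z : Fin (n+1) → ℍ[ℝ])
    (hu : u ≠ 0) (huu : herm u u = 0)
    (hv : (herm v v).re < 0) (hz : (herm z z).re < 0)
    (huv : ¬ Prp u v) :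
    lineDist u v z
      = 2 * (etaq u v z).re
        - ‖herm u z‖^2 * (herm v v).re / (‖herm u v‖^2 * (herm z z).re) := by
  have hα : herm z u ≠ 0 := herm_ne_zero_of_null hz hu huu
  have hA : herm u v ≠ 0 := by
    rw [← star_herm]
    exact star_ne_zero.2 (herm_ne_zero_of_null hv hu huu)
  obtain ⟨c, hc⟩ : ∃ c, herm z (linComb u v c 1) = 0 :=
    ⟨-star (herm z v * (herm z u)⁻¹), by
      rw [herm_linComb_right, star_neg, star_star, neg_mul, mul_assoc, inv_mul_cancel₀ hα]
      simp⟩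
  have hm : 0 < lineForm (herm u v) (herm v v).re c 1 := by
    rw [← re_herm_linComb_self_of_null huu]
    exact re_herm_self_pos_of_herm_eq_zero hz hc (linComb_ne_zero_of_not_prp huv c)
  have hA' : 0 < normSq (herm u v) := normSq_nonneg.lt_of_ne' (normSq_ne_zero.2 hA)
  rw [lineDist_eq_sInf huu hc, two_mul_re_etaq_sub_eq hA hz hc]
  refine (isLeast_mul_normSq_sub_mul_div_lineForm _ _ _ _ _ c normSq_nonneg hz hA ?_ ?_).csInf_eq
  · field_simp
    ring
  · exact div_neg_of_neg_of_pos (neg_neg_of_pos hm) hA'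

/-- for negative `z`, null `u`, negative `v`, pairwise non-proportional,
`d(u,v;z) = 2 Re(⟨u,z⟩⟨u,v⟩⁻¹⟨z,v⟩⟨z,z⟩⁻¹) − |⟨u,z⟩|²⟨v,v⟩/(|⟨u,v⟩|²⟨z,z⟩)`. -/
theorem stmt10 {n : ℕ} (hn : 2 ≤ n) (u v z : Fin (n+1) → ℍ[ℝ])
    (hu : u ≠ 0) (huu : herm u u = 0)
    (hv : (herm v v).re < 0) (hz : (herm z z).re < 0)
    (huv : ¬ Prp u v) (huz : ¬ Prp u z) (hvz : ¬ Prp v z) :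
    lineDist u v z
      = 2 * (etaq u v z).re
        - ‖herm u z‖^2 * (herm v v).re / (‖herm u v‖^2 * (herm z z).re) :=
  stmt10_general u v z hu huu hv hz huv
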